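/- If (a_1,...,a_{n+2}) is a tuple of positive integers with M_{n+2}(a_1,...,a_{n+2}) = ±S (n ≥ 3), then 2 ≤ a_1 + a_{n+2} ≤ n - 1, where S = [[0,-1],[1,0]]. -/

import Mathlib

open Matrix

def E (a : ℤ) : Matrix (Fin 2) (Fin 2) ℤ := !![a, -1; 1, 0]

/-- `M [a₁, …, aₙ] = E aₙ * ⋯ * E a₁`. -/
def M (l : List ℤ) : Matrix (Fin 2) (Fin 2) ℤ :=
  (l.map E).foldl (fun acc x => x * acc) 1

def S : Matrix (Fin 2) (Fin 2) ℤ := !![0, -1; 1, 0]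

def T : Matrix (Fin 2) (Fin 2) ℤ := !![1, 1; 0, 1]

/-! Appending `0` turns `M (x, m, y) = ±S` into `M (x, m, y, 0) = ∓1`, because `E 0 = S` and
`S² = -1`. Being `±1` is invariant under cyclic rotation of the tuple (`AB = ±1 ⇒ BA = ±1`), and
the rotation `(y, 0, x, m)` contracts by `E x * E 0 * E y = -E (x + y)` to `(x + y, m)`, a λ-quiddity of size
`n + 1`; its components are at most `n - 1`.

That bound is proved for nonnegative entries, by induction on the size. If all entries are `≥ 2`,
the continuants grow and `M 1 0 > 0`, so a `0` or a `1` occurs; rotated into the middle of a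
triple, it is removed by `(a, 0, b) ↦ (a + b)` or `(a, 1, b) ↦ (a - 1, b - 1)`, which keeps
`M = ±1` and the entries nonnegative. -/

def IsPmOne {R : Type*} [Ring R] (a : R) : Prop := a = 1 ∨ a = -1

section IsPmOne

variable {R : Type*} [Ring R] {a b : R}

theorem isPmOne_neg : IsPmOne (-a) ↔ IsPmOne a := by
  unfold IsPmOne
  rw [neg_eq_iff_eq_neg, neg_inj, or_comm]

theorem IsPmOne.mul_comm [IsDedekindFiniteMonoid R] (h : IsPmOne (a * b)) : IsPmOne (b * a) := by
  rcases h with h | h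
  · exact Or.inl (mul_eq_one_comm.mp h)
  · rw [← neg_eq_iff_eq_neg, ← mul_neg] at h
    rw [← isPmOne_neg, ← neg_mul]
    exact Or.inl (mul_eq_one_comm.mp h)

end IsPmOne

theorem foldl_mul_left_eq_prod_reverse_mul {α : Type*} [Monoid α] (l : List α) (a : α) :
    l.foldl (fun acc x => x * acc) a = l.reverse.prod * a := by
  induction l generalizing a with
  | nil => simp
  | cons x l ih => simp [ih, mul_assoc]

theorem M_eq_prod_reverse (l : List ℤ) : M l = (l.map E).reverse.prod := by
  rw [M, foldl_mul_left_eq_prod_reverse_mul, mul_one]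

@[simp] theorem M_nil : M [] = 1 := rfl

theorem M_append (s t : List ℤ) : M (s ++ t) = M t * M s := by
  simp [M_eq_prod_reverse]

theorem M_cons (c : ℤ) (t : List ℤ) : M (c :: t) = M t * E c := by
  simp [M_eq_prod_reverse]

theorem M_concat (t : List ℤ) (c : ℤ) : M (t ++ [c]) = E c * M t := by
  simp [M_eq_prod_reverse]

theorem E_mul_E_zero_mul_E (a b : ℤ) : E b * (E 0 * E a) = -E (a + b) := by
  ext i j; fin_cases i <;> fin_cases j <;> simp [E]

theorem E_mul_E_one_mul_E (a b : ℤ) : E b * (E 1 * E a) = E (b - 1) * E (a - 1) := by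
  ext i j; fin_cases i <;> fin_cases j <;> simp [E] <;> ring

theorem E_zero_mul_S : E 0 * S = -1 := by
  ext i j; fin_cases i <;> fin_cases j <;> simp [E, S]

theorem M_cons_zero_cons (a b : ℤ) (t : List ℤ) : M (a :: 0 :: b :: t) = -M ((a + b) :: t) := by
  simp only [M_cons, mul_assoc, E_mul_E_zero_mul_E, mul_neg]

theorem M_cons_one_cons (a b : ℤ) (t : List ℤ) :
    M (a :: 1 :: b :: t) = M ((a - 1) :: (b - 1) :: t) := by
  simp only [M_cons, mul_assoc, E_mul_E_one_mul_E]

theorem IsPmOne.M_append_comm {s t : List ℤ} (h : IsPmOne (M (s ++ t))) : IsPmOne (M (t ++ s)) := by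
  rw [M_append] at h ⊢
  exact h.mul_comm

theorem List.IsRotated.isPmOne_M {l l' : List ℤ} (h : l ~r l') (hl : IsPmOne (M l)) :
    IsPmOne (M l') := by
  obtain ⟨n, rfl⟩ := h
  rw [List.rotate_eq_drop_append_take_mod]
  rw [← List.take_append_drop (n % l.length) l] at hl
  exact hl.M_append_comm

theorem List.exists_isRotated_cons_cons_cons {α : Type*} {l : List α} {x : α} (hx : x ∈ l)
    (hl : 3 ≤ l.length) : ∃ a b t, l ~r a :: x :: b :: t := by
  obtain ⟨s, u, rfl⟩ := List.append_of_mem hx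
  obtain hus | ⟨w, a, hw⟩ := (u ++ s).eq_nil_or_concat'
  · simp_all
  rcases w with _ | ⟨b, t⟩
  · have := congrArg List.length hw
    simp at hl this
    omega
  refine ⟨a, b, t, List.isRotated_append.trans ?_⟩
  rw [List.cons_append, hw]
  exact List.isRotated_concat a (x :: b :: t)

theorem forall_le_length_sub_two_of_length_le_two {l : List ℤ} (hlen : l.length ≤ 2)
    (h : IsPmOne (M l)) : ∀ c ∈ l, c ≤ l.length - 2 := by
  have h01 : M l 0 1 = 0 := by rcases h with h | h <;> simp [h]
  have h10 : M l 1 0 = 0 := by rcases h with h | h <;> simp [h]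
  rcases l with _ | ⟨c, _ | ⟨d, _ | _⟩⟩
  · simp
  · simp [M_cons, E] at h01
  · simp [M_cons, E, Matrix.mul_apply] at h01 h10
    simp [h01, h10]
  · simp at hlen

theorem M_one_zero_nonneg_and_lt_M_zero_zero {l : List ℤ} (hl : ∀ a ∈ l, 2 ≤ a) :
    0 ≤ M l 1 0 ∧ M l 1 0 < M l 0 0 := by
  induction l using List.reverseRecOn with
  | nil => simp
  | append_singleton t c ih =>
    have hc : 2 ≤ c := hl c (by simp)
    obtain ⟨h0, h1⟩ := ih fun a ha => hl a (by simp [ha])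
    have e10 : M (t ++ [c]) 1 0 = M t 0 0 := by simp [M_concat, E, Matrix.mul_apply]
    have e00 : M (t ++ [c]) 0 0 = c * M t 0 0 - M t 1 0 := by
      simp [M_concat, E, Matrix.mul_apply]; ring
    rw [e10, e00]
    constructor <;> nlinarith

theorem not_isPmOne_M_of_two_le {l : List ℤ} (hne : l ≠ []) (hl : ∀ a ∈ l, 2 ≤ a) :
    ¬IsPmOne (M l) := by
  obtain ⟨t, c, rfl⟩ := (l.eq_nil_or_concat').resolve_left hne
  have hpos : 0 < M (t ++ [c]) 1 0 := by
    obtain ⟨h0, h1⟩ := M_one_zero_nonneg_and_lt_M_zero_zero (l := t) fun a ha => hl a (by simp [ha])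
    simp only [M_concat, E, Matrix.mul_apply]
    simpa using h0.trans_lt h1
  rintro (h | h) <;> simp [h] at hpos

theorem forall_le_length_sub_two_cons_zero_cons {a b : ℤ} {t : List ℤ} (ha : 0 ≤ a) (hb : 0 ≤ b)
    (h : ∀ c ∈ (a + b) :: t, c ≤ ((a + b) :: t).length - 2) :
    ∀ c ∈ a :: 0 :: b :: t, c ≤ (a :: 0 :: b :: t).length - 2 := by
  simp only [List.forall_mem_cons, List.length_cons] at h ⊢
  push_cast at h ⊢
  exact ⟨by omega, by omega, by omega, fun c hc => by linarith [h.2 c hc]⟩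

theorem forall_le_length_sub_two_cons_one_cons {a b : ℤ} {t : List ℤ}
    (h : ∀ c ∈ (a - 1) :: (b - 1) :: t, c ≤ ((a - 1) :: (b - 1) :: t).length - 2) :
    ∀ c ∈ a :: 1 :: b :: t, c ≤ (a :: 1 :: b :: t).length - 2 := by
  simp only [List.forall_mem_cons, List.length_cons] at h ⊢
  push_cast at h ⊢
  exact ⟨by omega, by omega, by omega, fun c hc => by linarith [h.2.2 c hc]⟩

theorem forall_le_length_sub_two_of_isPmOne {l : List ℤ} (hl : ∀ a ∈ l, 0 ≤ a)
    (h : IsPmOne (M l)) : ∀ c ∈ l, c ≤ l.length - 2 := by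
  induction hk : l.length using Nat.strong_induction_on generalizing l with
  | _ k ih =>
  subst hk
  rcases le_or_gt l.length 2 with hlen | hlen
  · exact forall_le_length_sub_two_of_length_le_two hlen h
  by_cases h0 : (0 : ℤ) ∈ l
  · obtain ⟨a, b, t, hrot⟩ := List.exists_isRotated_cons_cons_cons h0 hlen
    have hred : IsPmOne (M ((a + b) :: t)) := by
      rw [← isPmOne_neg, ← M_cons_zero_cons]
      exact hrot.isPmOne_M h
    simp only [hrot.mem_iff, hrot.perm.length_eq, List.forall_mem_cons] at hl ⊢
    obtain ⟨ha, -, hb, ht⟩ := hl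
    have := ih _ (by simp [hrot.perm.length_eq]) (List.forall_mem_cons.mpr ⟨by omega, ht⟩) hred rfl
    simpa only [List.forall_mem_cons] using forall_le_length_sub_two_cons_zero_cons ha hb this
  have h1 : (1 : ℤ) ∈ l := by
    by_contra h1
    refine not_isPmOne_M_of_two_le (List.ne_nil_of_length_pos (by omega)) (fun a ha => ?_) h
    have : a ≠ 0 := fun h => h0 (h ▸ ha)
    have : a ≠ 1 := fun h => h1 (h ▸ ha)
    have := hl a ha
    omega
  obtain ⟨a, b, t, hrot⟩ := List.exists_isRotated_cons_cons_cons h1 hlen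
  have hred : IsPmOne (M ((a - 1) :: (b - 1) :: t)) := by
    rw [← M_cons_one_cons]
    exact hrot.isPmOne_M h
  simp only [hrot.mem_iff, hrot.perm.length_eq, List.forall_mem_cons] at hl ⊢
  simp only [hrot.mem_iff, List.mem_cons, not_or] at h0
  obtain ⟨ha, -, hb, ht⟩ := hl
  obtain ⟨ha0, -, hb0, -⟩ := h0
  have := ih _ (by simp [hrot.perm.length_eq])
    (List.forall_mem_cons.mpr ⟨by omega, List.forall_mem_cons.mpr ⟨by omega, ht⟩⟩) hred rfl
  simpa only [List.forall_mem_cons] using forall_le_length_sub_two_cons_one_cons this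

theorem stmt16_general (n : ℕ) (x y : ℤ) (m : List ℤ) (hm : m.length = n)
    (hx : 0 < x) (hy : 0 < y) (hpos : ∀ a ∈ m, 0 < a)
    (h : M (x :: m ++ [y]) = S ∨ M (x :: m ++ [y]) = -S) :
    2 ≤ x + y ∧ x + y ≤ (n : ℤ) - 1 := by
  have hclosed : IsPmOne (M ((x :: m) ++ [y, 0])) := by
    rw [← List.singleton_append (l := [0]), ← List.append_assoc, M_concat, ← isPmOne_neg]
    rcases h with h | h <;> rw [h] <;> simp [E_zero_mul_S, IsPmOne]
  have hrot : IsPmOne (M (y :: 0 :: x :: m)) := List.isRotated_append.isPmOne_M hclosed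
  rw [M_cons_zero_cons, isPmOne_neg] at hrot
  have hnn : ∀ a ∈ (y + x) :: m, 0 ≤ a :=
    List.forall_mem_cons.mpr ⟨by omega, fun a ha => (hpos a ha).le⟩
  have hbound := forall_le_length_sub_two_of_isPmOne hnn hrot (y + x) List.mem_cons_self
  simp only [List.length_cons, hm] at hbound
  push_cast at hbound
  constructor <;> linarith

theorem stmt16 (n : ℕ) (hn : 3 ≤ n) (x y : ℤ) (m : List ℤ) (hm : m.length = n)
    (hx : 0 < x) (hy : 0 < y) (hpos : ∀ a ∈ m, 0 < a)
    (h : M (x :: m ++ [y]) = S ∨ M (x :: m ++ [y]) = -S) :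
    2 ≤ x + y ∧ x + y ≤ (n : ℤ) - 1 :=
  stmt16_general n x y m hm hx hy hpos h
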